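/- Let m ≥ 4, let G = (ℤ/mℤ)², let g ∈ G, and let S = f₁^[m−1] · f₂^[m−1] · (f₁+f₂) ∈ Υ_nu(G), where (f₁,f₂) is a basis of G. If S' = f₂^[−1] · (f₁+f₂)^[−1] · S · (f₂+g) · (f₁+f₂−g) ∈ Υ_nu(G), then g ∈ {0, f₁} and S' = S. -/

import Mathlib

/-- `(e₁, e₂)` is a basis of the abelian group `G`, i.e. `G = ⟨e₁⟩ ⊕ ⟨e₂⟩`. -/
def IsBasis {G : Type*} [AddCommGroup G] (e₁ e₂ : G) : Prop :=
  AddSubgroup.zmultiples e₁ ⊔ AddSubgroup.zmultiples e₂ = ⊤ ∧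
    AddSubgroup.zmultiples e₁ ⊓ AddSubgroup.zmultiples e₂ = ⊥

/-- `Υ(G)` for `G = (ℤ/mℤ)²`: all sequences `e₁^[m-1] · ∏_{i=1}^m (xᵢe₁ + e₂)` for some
basis `(e₁, e₂)` and `x₁, …, x_m ∈ [0, m-1]` with `x₁ + ⋯ + x_m ≡ 1 (mod m)`. -/
def Upsilon (m : ℕ) : Set (Multiset (ZMod m × ZMod m)) :=
  { S | ∃ (e₁ e₂ : ZMod m × ZMod m) (x : Fin m → ℕ),
      IsBasis e₁ e₂ ∧ (∀ i, x i ≤ m - 1) ∧ (∑ i, x i) % m = 1 % m ∧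
      S = Multiset.replicate (m - 1) e₁ +
          Multiset.map (fun i => x i • e₁ + e₂) (Finset.univ : Finset (Fin m)).val }

/-- `Υ_u(G)`: members of `Υ(G)` with a unique term of multiplicity `m - 1`. -/
def UpsilonU (m : ℕ) : Set (Multiset (ZMod m × ZMod m)) :=
  { S | S ∈ Upsilon m ∧ ∃! g, S.count g = m - 1 }

/-- `Υ_nu(G)`: sequences `e₁^[m-1] · e₂^[m-1] · (e₁ + e₂)` for some basis `(e₁, e₂)`. -/
def UpsilonNU (m : ℕ) : Set (Multiset (ZMod m × ZMod m)) :=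
  { S | ∃ (e₁ e₂ : ZMod m × ZMod m), IsBasis e₁ e₂ ∧
      S = Multiset.replicate (m - 1) e₁ + Multiset.replicate (m - 1) e₂ + {e₁ + e₂} }

/-!
Removing `f₂` and `f₁ + f₂` from `S` leaves `T = f₁^[m-1] · f₂^[m-2]`. In a member of `Υ_nu(G)`
every term has multiplicity `0`, `1` or `m - 1`, because the two basis elements and their sum
are distinct. As `m - 2` is none of these for `m ≥ 4`, exactly one of the new terms `f₂ + g`,
`f₁ + f₂ - g` equals `f₂`, i.e. `g = 0` or `g = f₁`; either way the removed pair is put back.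
-/

theorem ZMod.not_isAddCyclic_prod_self {m : ℕ} (hm : m ≠ 1) :
    ¬IsAddCyclic (ZMod m × ZMod m) := by
  rw [AddGroup.isAddCyclic_prod_iff, Nat.card_zmod, Nat.coprime_self]
  tauto

namespace IsBasis

variable {G : Type*} [AddCommGroup G] {e₁ e₂ : G}

theorem left_ne_zero (hG : ¬IsAddCyclic G) (h : IsBasis e₁ e₂) : e₁ ≠ 0 := by
  rintro rfl
  have htop := h.1
  rw [AddSubgroup.zmultiples_zero_eq_bot, bot_sup_eq] at htop
  exact hG (isAddCyclic_iff_exists_zmultiples_eq_top.mpr ⟨e₂, htop⟩)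

theorem right_ne_zero (hG : ¬IsAddCyclic G) (h : IsBasis e₁ e₂) : e₂ ≠ 0 := by
  rintro rfl
  have htop := h.1
  rw [AddSubgroup.zmultiples_zero_eq_bot, sup_bot_eq] at htop
  exact hG (isAddCyclic_iff_exists_zmultiples_eq_top.mpr ⟨e₁, htop⟩)

theorem ne (hG : ¬IsAddCyclic G) (h : IsBasis e₁ e₂) : e₁ ≠ e₂ := by
  rintro rfl
  have hbot := h.2
  rw [inf_idem, AddSubgroup.zmultiples_eq_bot] at hbot
  exact h.left_ne_zero hG hbot

end IsBasis

theorem count_of_mem_upsilonNU {m : ℕ} {S : Multiset (ZMod m × ZMod m)} (hS : S ∈ UpsilonNU m)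
    (a : ZMod m × ZMod m) : S.count a = 0 ∨ S.count a = 1 ∨ S.count a = m - 1 := by
  obtain ⟨e₁, e₂, he, rfl⟩ := hS
  rcases eq_or_ne m 1 with rfl | hm
  · simp only [Multiset.count_add, Multiset.count_singleton, Nat.sub_self,
      Multiset.replicate_zero, Multiset.count_zero]
    split_ifs <;> simp
  have hG := ZMod.not_isAddCyclic_prod_self hm
  have h₁ := he.left_ne_zero hG
  have h₂ := he.right_ne_zero hG
  have h₁₂ := he.ne hG
  simp only [Multiset.count_add, Multiset.count_replicate, Multiset.count_singleton]
  split_ifs <;> grind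

section

variable {G : Type*} [AddCommGroup G]

theorem replicate_add_replicate_add_singleton_eq {m : ℕ} (hm : 2 ≤ m) (a b : G) :
    Multiset.replicate (m - 1) a + Multiset.replicate (m - 1) b + {a + b} =
      Multiset.replicate (m - 1) a + Multiset.replicate (m - 2) b + {b, a + b} := by
  obtain ⟨k, rfl⟩ : ∃ k, m = k + 2 := ⟨m - 2, by omega⟩
  simp [Multiset.replicate_succ, Multiset.insert_eq_cons, add_assoc]

theorem pair_add_sub_eq {a b g : G} (hg : g = 0 ∨ g = a) :
    ({b + g, a + b - g} : Multiset G) = {b, a + b} := by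
  rcases hg with rfl | rfl
  · simp
  · rw [add_comm b, add_sub_cancel_left]
    exact Multiset.pair_comm _ _

theorem count_replicate_add_pair_right [DecidableEq G] {a b : G} (hab : a ≠ b) (k l : ℕ)
    (g : G) :
    (Multiset.replicate k a + Multiset.replicate l b + {b + g, a + b - g}).count b =
      l + (if g = 0 then 1 else 0) + (if g = a then 1 else 0) := by
  have h₁ : b = b + g ↔ g = 0 := left_eq_add
  have h₂ : b = a + b - g ↔ g = a := by
    rw [eq_sub_iff_add_eq, add_comm a b, add_right_inj, eq_comm]
  simp only [Multiset.insert_eq_cons, Multiset.count_add, Multiset.count_replicate,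
    Multiset.count_cons, Multiset.count_singleton, if_neg hab, h₁, h₂]
  split_ifs <;> omega

end

theorem stmt_12_general (m : ℕ) (hm : 4 ≤ m) (g f₁ f₂ : ZMod m × ZMod m)
    (hbasis : IsBasis f₁ f₂)
    (S : Multiset (ZMod m × ZMod m))
    (hS : S = Multiset.replicate (m - 1) f₁ + Multiset.replicate (m - 1) f₂ + {f₁ + f₂})
    (S' : Multiset (ZMod m × ZMod m))
    (hS' : S' = (S - {f₂, f₁ + f₂}) + {f₂ + g, f₁ + f₂ - g})
    (hS'U : S' ∈ UpsilonNU m) :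
    (g = 0 ∨ g = f₁) ∧ S' = S := by
  set T := Multiset.replicate (m - 1) f₁ + Multiset.replicate (m - 2) f₂
  have hST : S = T + {f₂, f₁ + f₂} := by
    rw [hS, replicate_add_replicate_add_singleton_eq (by omega)]
  have hS'T : S' = T + {f₂ + g, f₁ + f₂ - g} := by
    rw [hS', hST, add_tsub_cancel_right]
  have hg : g = 0 ∨ g = f₁ := by
    have hcount := count_of_mem_upsilonNU hS'U f₂
    rw [hS'T, count_replicate_add_pair_right (hbasis.ne (ZMod.not_isAddCyclic_prod_self
      (by omega)))] at hcount
    split_ifs at hcount <;> first | omega | tauto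
  exact ⟨hg, by rw [hS'T, hST, pair_add_sub_eq hg]⟩

theorem stmt_12 (m : ℕ) (hm : 4 ≤ m) (g f₁ f₂ : ZMod m × ZMod m)
    (hbasis : IsBasis f₁ f₂)
    (S : Multiset (ZMod m × ZMod m))
    (hS : S = Multiset.replicate (m - 1) f₁ + Multiset.replicate (m - 1) f₂ + {f₁ + f₂})
    (hSNU : S ∈ UpsilonNU m)
    (S' : Multiset (ZMod m × ZMod m))
    (hS' : S' = (S - {f₂, f₁ + f₂}) + {f₂ + g, f₁ + f₂ - g})
    (hS'U : S' ∈ UpsilonNU m) :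
    (g = 0 ∨ g = f₁) ∧ S' = S :=
  stmt_12_general m hm g f₁ f₂ hbasis S hS S' hS' hS'U
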